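/- With v_1, v_2, v_3 defined by the recursive Mex algorithm, the three sets {v_1(n) : n ≥ 1}, {v_2(n) : n ≥ 1}, {v_3(n) : n ≥ 1} are pairwise disjoint and their union is all of ℕ≥1. -/

import Mathlib

/-!
Every step of the algorithm takes its three new coordinates outside `F_n` (they are mexes of sets
containing `F_n`), and `v_1 < v_2 < v_3` because the mex defining `v_{i+1}` avoids `{1, …, v_i}`.
Hence no value is produced twice, and none is `0 ∈ F_0`. Conversely `v_1(n+1) = mex F_n` lies in
`F_{n+1}`, so `n ↦ mex F_n` is strictly increasing; thus `k < mex F_{k+1}`, i.e. `k ∈ F_{k+1}`, and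
every `k ≥ 1` is a coordinate of some `v(n)`.
-/

/-- Minimum excluded value of a set of natural numbers. -/
noncomputable def mex (S : Set ℕ) : ℕ := sInf {m : ℕ | m ∉ S}

/-- Coordinates of a set of triples. -/
def coords (G : Set (ℕ × ℕ × ℕ)) : Set ℕ :=
  {k | ∃ x ∈ G, k = x.1 ∨ k = x.2.1 ∨ k = x.2.2}

/-- Pairwise coordinate differences of a set of triples. -/
def diffs (G : Set (ℕ × ℕ × ℕ)) : Set ℕ :=
  {d | ∃ x ∈ G, d = x.2.1 - x.1 ∨ d = x.2.2 - x.2.1 ∨ d = x.2.2 - x.1}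

/-- One step of the Mex algorithm: the next P-position. -/
noncomputable def step (G : Set (ℕ × ℕ × ℕ)) : ℕ × ℕ × ℕ :=
  let F := coords G
  let D := diffs G
  let a := mex F
  let b := mex ((fun d => a + d) '' D ∪ Set.Icc 1 a ∪ F)
  let c := mex ((fun d => b + d) '' D ∪ Set.Icc 1 b ∪ F)
  (a, b, c)

/-- The sets `G_n` of P-positions computed by the Mex algorithm. -/
noncomputable def Gset : ℕ → Set (ℕ × ℕ × ℕ)
  | 0 => {(0, 0, 0)}
  | n + 1 => Gset n ∪ {step (Gset n)}

/-- The `n`-th P-position `(v_1(n), v_2(n), v_3(n))`. -/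
noncomputable def v : ℕ → ℕ × ℕ × ℕ
  | 0 => (0, 0, 0)
  | n + 1 => step (Gset n)

noncomputable def v1 (n : ℕ) : ℕ := (v n).1
noncomputable def v2 (n : ℕ) : ℕ := (v n).2.1
noncomputable def v3 (n : ℕ) : ℕ := (v n).2.2

/-- `F_n`: the set of coordinates of elements of `G_n`. -/
noncomputable def Fset (n : ℕ) : Set ℕ := coords (Gset n)

/-- `D_n`: the set of pairwise coordinate differences over `G_n`. -/
noncomputable def Dset (n : ℕ) : Set ℕ := diffs (Gset n)

section Mex

variable {S T : Set ℕ}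

lemma mex_notMem (hS : S.Finite) : mex S ∉ S :=
  Nat.sInf_mem hS.infinite_compl.nonempty

lemma mem_of_lt_mex {m : ℕ} (h : m < mex S) : m ∈ S :=
  not_not.1 (Nat.notMem_of_lt_sInf h)

lemma lt_mex_of_Iic_subset {a : ℕ} (hS : S.Finite) (h : Set.Iic a ⊆ S) : a < mex S :=
  lt_of_not_ge fun ha => mex_notMem hS (h ha)

lemma mex_lt_mex (hT : T.Finite) (hST : S ⊆ T) (h : mex S ∈ T) : mex S < mex T :=
  lt_mex_of_Iic_subset hT fun _ hm =>
    (Set.mem_Iic.1 hm).lt_or_eq.elim (fun hlt => hST (mem_of_lt_mex hlt)) (· ▸ h)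

lemma mex_notMem_of_subset (hT : T.Finite) (hST : S ⊆ T) : mex T ∉ S :=
  fun h => mex_notMem hT (hST h)

lemma lt_mex_union_Icc_union {E F : Set ℕ} (hE : E.Finite) (hF : F.Finite) (h0 : 0 ∈ F)
    (a : ℕ) : a < mex (E ∪ Set.Icc 1 a ∪ F) := by
  refine lt_mex_of_Iic_subset ((hE.union (Set.finite_Icc 1 a)).union hF) fun k hk => ?_
  rcases Nat.eq_zero_or_pos k with rfl | hpos
  · exact Or.inr h0
  · exact Or.inl (Or.inr ⟨hpos, hk⟩)

end Mex

section Coords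

variable {G H : Set (ℕ × ℕ × ℕ)}

lemma coords_singleton (x : ℕ × ℕ × ℕ) : coords {x} = {x.1, x.2.1, x.2.2} := by
  ext k
  simp [coords]

lemma coords_union : coords (G ∪ H) = coords G ∪ coords H := by
  ext k
  simp [coords, or_and_right, exists_or]

lemma coords_finite (hG : G.Finite) : (coords G).Finite :=
  (hG.biUnion fun x _ => Set.toFinite {x.1, x.2.1, x.2.2}).subset fun _ ⟨x, hx, hk⟩ =>
    Set.mem_biUnion hx (by simpa using hk)

lemma diffs_finite (hG : G.Finite) : (diffs G).Finite :=
  (hG.biUnion fun x _ => Set.toFinite {x.2.1 - x.1, x.2.2 - x.2.1, x.2.2 - x.1}).subset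
    fun _ ⟨x, hx, hk⟩ => Set.mem_biUnion hx (by simpa using hk)

end Coords

section Step

variable {G : Set (ℕ × ℕ × ℕ)}

lemma disjoint_coords_step (hG : G.Finite) : Disjoint (coords G) (coords {step G}) := by
  have hfin (a : ℕ) : ((a + ·) '' diffs G ∪ Set.Icc 1 a ∪ coords G).Finite :=
    (((diffs_finite hG).image _).union (Set.finite_Icc 1 a)).union (coords_finite hG)
  rw [coords_singleton, Set.disjoint_insert_right, Set.disjoint_insert_right,
    Set.disjoint_singleton_right]
  exact ⟨mex_notMem (coords_finite hG), mex_notMem_of_subset (hfin _) Set.subset_union_right,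
    mex_notMem_of_subset (hfin _) Set.subset_union_right⟩

lemma step_fst_lt_snd (hG : G.Finite) (h0 : 0 ∈ coords G) : (step G).1 < (step G).2.1 :=
  lt_mex_union_Icc_union ((diffs_finite hG).image _) (coords_finite hG) h0 _

lemma step_snd_lt_thd (hG : G.Finite) (h0 : 0 ∈ coords G) : (step G).2.1 < (step G).2.2 :=
  lt_mex_union_Icc_union ((diffs_finite hG).image _) (coords_finite hG) h0 _

end Step

lemma Gset_finite (n : ℕ) : (Gset n).Finite := by
  induction n with
  | zero => exact Set.finite_singleton _
  | succ n ih => exact ih.union (Set.finite_singleton _)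

lemma Fset_finite (n : ℕ) : (Fset n).Finite :=
  coords_finite (Gset_finite n)

lemma zero_mem_Fset (n : ℕ) : 0 ∈ Fset n := by
  have hG : (0, 0, 0) ∈ Gset n := by
    induction n with
    | zero => rfl
    | succ n ih => exact Or.inl ih
  exact ⟨_, hG, Or.inl rfl⟩

lemma Fset_succ (n : ℕ) : Fset (n + 1) = Fset n ∪ coords {v (n + 1)} :=
  coords_union

lemma Fset_mono : Monotone Fset :=
  monotone_nat_of_le_succ fun n => (Fset_succ n).symm ▸ Set.subset_union_left

lemma Fset_eq (n : ℕ) : Fset n = {0} ∪ ⋃ m < n, coords {v (m + 1)} := by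
  induction n with
  | zero => simp [Fset, Gset, coords_singleton]
  | succ n ih => rw [Fset_succ, ih, Set.biUnion_lt_succ, Set.union_assoc]

lemma disjoint_Fset_coords_v (n : ℕ) : Disjoint (Fset n) (coords {v (n + 1)}) :=
  disjoint_coords_step (Gset_finite n)

lemma v1_lt_v2 (n : ℕ) : v1 (n + 1) < v2 (n + 1) :=
  step_fst_lt_snd (Gset_finite n) (zero_mem_Fset n)

lemma v2_lt_v3 (n : ℕ) : v2 (n + 1) < v3 (n + 1) :=
  step_snd_lt_thd (Gset_finite n) (zero_mem_Fset n)

lemma disjoint_coords_v {m n : ℕ} (h : m ≠ n) :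
    Disjoint (coords {v (m + 1)}) (coords {v (n + 1)}) := by
  wlog hlt : m < n generalizing m n
  · exact (this h.symm (h.lt_or_gt.resolve_left hlt)).symm
  have hsub : coords {v (m + 1)} ⊆ Fset n :=
    (Fset_succ m ▸ Set.subset_union_right).trans (Fset_mono hlt)
  exact (disjoint_Fset_coords_v n).mono_left hsub

lemma coord_v_ne {m n x y : ℕ} (hx : x ∈ coords {v (m + 1)}) (hy : y ∈ coords {v (n + 1)})
    (hmn : m = n → x ≠ y) : x ≠ y := by
  by_cases h : m = n
  · exact hmn h
  · exact (disjoint_coords_v h).ne_of_mem hx hy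

lemma strictMono_mex_Fset : StrictMono fun n => mex (Fset n) :=
  strictMono_nat_of_lt_succ fun n =>
    mex_lt_mex (Fset_finite (n + 1)) (Fset_mono n.le_succ)
      ((Fset_succ n).symm ▸ Or.inr ⟨_, rfl, Or.inl rfl⟩)

lemma iUnion_coords_v : ⋃ n, coords {v (n + 1)} = {k | 1 ≤ k} := by
  ext k
  constructor
  · rintro ⟨_, ⟨n, rfl⟩, hk⟩
    exact Nat.one_le_iff_ne_zero.2 fun h0 =>
      (disjoint_Fset_coords_v n).ne_of_mem (zero_mem_Fset n) hk h0.symm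
  · intro hk
    have hmem : k ∈ Fset (k + 1) := mem_of_lt_mex (strictMono_mex_Fset.id_le (k + 1))
    rw [Fset_eq] at hmem
    rcases hmem with h0 | hk'
    · exact absurd h0 (Nat.one_le_iff_ne_zero.1 hk)
    · obtain ⟨m, -, hm⟩ := Set.mem_iUnion₂.1 hk'
      exact Set.mem_iUnion.2 ⟨m, hm⟩

lemma image_setOf_one_le {α : Type*} (f : ℕ → α) :
    f '' {n | 1 ≤ n} = Set.range fun n => f (n + 1) := by
  ext y
  constructor
  · rintro ⟨n, hn, rfl⟩
    obtain ⟨m, rfl⟩ := Nat.exists_eq_add_of_le' hn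
    exact ⟨m, rfl⟩
  · rintro ⟨m, rfl⟩
    exact ⟨m + 1, Nat.le_add_left 1 m, rfl⟩

theorem stmt7 :
    Disjoint (v1 '' {n | 1 ≤ n}) (v2 '' {n | 1 ≤ n}) ∧
    Disjoint (v1 '' {n | 1 ≤ n}) (v3 '' {n | 1 ≤ n}) ∧
    Disjoint (v2 '' {n | 1 ≤ n}) (v3 '' {n | 1 ≤ n}) ∧
    v1 '' {n | 1 ≤ n} ∪ v2 '' {n | 1 ≤ n} ∪ v3 '' {n | 1 ≤ n} = {k : ℕ | 1 ≤ k} := by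
  have h1 (n : ℕ) : v1 (n + 1) ∈ coords {v (n + 1)} := ⟨_, rfl, Or.inl rfl⟩
  have h2 (n : ℕ) : v2 (n + 1) ∈ coords {v (n + 1)} := ⟨_, rfl, Or.inr (Or.inl rfl)⟩
  have h3 (n : ℕ) : v3 (n + 1) ∈ coords {v (n + 1)} := ⟨_, rfl, Or.inr (Or.inr rfl)⟩
  simp only [image_setOf_one_le, Set.disjoint_range_iff]
  refine ⟨fun m n => coord_v_ne (h1 m) (h2 n) fun h => h ▸ (v1_lt_v2 m).ne,
    fun m n => coord_v_ne (h1 m) (h3 n) fun h => h ▸ ((v1_lt_v2 m).trans (v2_lt_v3 m)).ne,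
    fun m n => coord_v_ne (h2 m) (h3 n) fun h => h ▸ (v2_lt_v3 m).ne, ?_⟩
  rw [← iUnion_coords_v]
  ext k
  simp [coords_singleton, v1, v2, v3, or_assoc, exists_or, eq_comm]
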